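/- (Uhlmann's theorem) Let ρ^A and σ^A be density operators on A, and let |ψ⟩ ∈ A ⊗ B and |φ⟩ ∈ A ⊗ C be purifications of ρ^A and σ^A respectively. Then the fidelity F(ρ, σ) = ‖√ρ √σ‖₁ equals the maximum over partial isometries V: B → C of |⟨ψ|(I_A ⊗ V†)|φ⟩|. -/

import Mathlib

open Matrix Kronecker
open scoped ComplexOrder

/-- The square root of a positive semidefinite matrix, as defined in Mathlib (Dec 2024). -/
noncomputable def Matrix.PosSemidef.sqrt {n 𝕜 : Type*} [Fintype n] [RCLike 𝕜] [DecidableEq n]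
    {A : Matrix n n 𝕜} (hA : A.PosSemidef) : Matrix n n 𝕜 :=
  hA.1.eigenvectorUnitary.1 * diagonal ((↑) ∘ (√·) ∘ hA.1.eigenvalues) *
  (star hA.1.eigenvectorUnitary : Matrix n n 𝕜)

noncomputable def traceNorm {n m : Type*} [Fintype n] [Fintype m] [DecidableEq m]
    (M : Matrix n m ℂ) : ℝ :=
  ((Matrix.posSemidef_conjTranspose_mul_self M).sqrt.trace).re

noncomputable def ptraceFst {a b : Type*} [Fintype a]
    (M : Matrix (a × b) (a × b) ℂ) : Matrix b b ℂ :=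
  Matrix.of fun i j => ∑ k, M (k, i) (k, j)

noncomputable def ptraceSnd {a b : Type*} [Fintype b]
    (M : Matrix (a × b) (a × b) ℂ) : Matrix a a ℂ :=
  Matrix.of fun i j => ∑ k, M (i, k) (j, k)


open scoped InnerProductSpace
/-!
Write the purifications as coefficient matrices `X i j = ψ (i, j)` and `Y i l = φ (i, l)`.
Then `ρ = X Xᴴ`, `σ = Y Yᴴ` and `⟨ψ|(I ⊗ V†)|φ⟩ = tr (Xᴴ Y V̄)`. The trace norm of `M` depends
only on `Mᴴ M`, and also only on `M Mᴴ`; this gives `‖√ρ √σ‖₁ = ‖Xᴴ Y‖₁`. What is left is the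
variational formula `‖M‖₁ = max_W |tr (M W)|` over partial isometries `W`. Write the polar
decomposition `M = U |M|`. Then `W U` is a contraction, so Cauchy–Schwarz for the Hilbert–Schmidt
inner product gives `|tr (M W)| = |tr (|M|^½ W U |M|^½)| ≤ tr |M|`, and `W = Uᴴ` attains the bound.
-/

open scoped MatrixOrder

namespace Matrix

variable {m n p : Type*} [Fintype m] [Fintype n] [Fintype p]

lemma PosSemidef.sqrt_eq_cfcSqrt [DecidableEq n] {A : Matrix n n ℂ} (hA : A.PosSemidef) :
    hA.sqrt = CFC.sqrt A := by
  rw [CFC.sqrt_eq_cfc, cfc_nnreal_eq_real _ A hA.nonneg, hA.1.cfc_eq]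
  simp only [IsHermitian.cfc, Unitary.conjStarAlgAut_apply, PosSemidef.sqrt]
  congr 2
  ext i j
  simp [diagonal_apply, max_eq_left (hA.eigenvalues_nonneg i)]

lemma PosSemidef.isHermitian_sqrt [DecidableEq n] {A : Matrix n n ℂ} (hA : A.PosSemidef) :
    hA.sqrt.IsHermitian := by
  rw [hA.sqrt_eq_cfcSqrt]
  exact (CFC.sqrt_nonneg A).isSelfAdjoint

lemma PosSemidef.sqrt_mul_self [DecidableEq n] {A : Matrix n n ℂ} (hA : A.PosSemidef) :
    hA.sqrt * hA.sqrt = A := by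
  rw [hA.sqrt_eq_cfcSqrt]
  exact CFC.sqrt_mul_sqrt_self A hA.nonneg

lemma traceNorm_eq_re_trace_sqrt [DecidableEq n] (M : Matrix m n ℂ) :
    traceNorm M = (CFC.sqrt (Mᴴ * M)).trace.re := by
  rw [traceNorm, PosSemidef.sqrt_eq_cfcSqrt]

lemma isIdempotentElem_mul_conjTranspose_self {U : Matrix m n ℂ}
    (h : IsIdempotentElem (Uᴴ * U)) : IsIdempotentElem (U * Uᴴ) := by
  set P := Uᴴ * U
  have hU : U * P = U := by
    have hP : Pᴴ = P := (isHermitian_conjTranspose_mul_self U).eq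
    have : (U - U * P)ᴴ * (U - U * P) = P - P * P - P * P + P * P * P := by
      simp only [conjTranspose_sub, conjTranspose_mul, hP, Matrix.sub_mul, Matrix.mul_sub, P,
        Matrix.mul_assoc]
      abel
    refine (sub_eq_zero.mp ?_).symm
    rw [← conjTranspose_mul_self_eq_zero, this, h.eq, h.eq]
    abel
  unfold IsIdempotentElem
  rw [← Matrix.mul_assoc, Matrix.mul_assoc U Uᴴ U, hU]

lemma isIdempotentElem_mul_conjTranspose_self_iff {U : Matrix m n ℂ} :
    IsIdempotentElem (U * Uᴴ) ↔ IsIdempotentElem (Uᴴ * U) :=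
  ⟨fun h => by simpa using isIdempotentElem_mul_conjTranspose_self (U := Uᴴ) (by simpa using h),
    isIdempotentElem_mul_conjTranspose_self⟩

lemma isIdempotentElem_conjTranspose_mul_self_map_star {V : Matrix m n ℂ} :
    IsIdempotentElem ((V.map star)ᴴ * V.map star) ↔ IsIdempotentElem (Vᴴ * V) := by
  have hmap : (V.map star)ᴴ * V.map star = (Vᴴ * V).map (starRingEnd ℂ) := by
    rw [Matrix.map_mul]; rfl
  rw [hmap, IsIdempotentElem, IsIdempotentElem, ← Matrix.map_mul]
  exact (map_injective (RingHom.injective _)).eq_iff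

lemma conjTranspose_mul_mul_le_of_le {A B : Matrix m m ℂ} (h : A ≤ B) (C : Matrix m n ℂ) :
    Cᴴ * A * C ≤ Cᴴ * B * C := by
  rw [le_iff] at h ⊢
  simpa only [Matrix.mul_sub, Matrix.sub_mul] using h.conjTranspose_mul_mul_same C

lemma conjTranspose_mul_self_le_one [DecidableEq n] {W : Matrix m n ℂ}
    (h : IsIdempotentElem (Wᴴ * W)) : Wᴴ * W ≤ 1 :=
  IsStarProjection.le_one ⟨h, (isHermitian_conjTranspose_mul_self W).isSelfAdjoint⟩

lemma re_trace_le_re_trace {A B : Matrix n n ℂ} (h : A ≤ B) : A.trace.re ≤ B.trace.re := by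
  have h := (le_iff.mp h).trace_nonneg
  rw [trace_sub, sub_nonneg] at h
  exact (Complex.le_def.mp h).1

lemma exists_polar_decomposition [DecidableEq n] (M : Matrix m n ℂ) :
    ∃ U : Matrix m n ℂ, IsIdempotentElem (Uᴴ * U) ∧
      Uᴴ * U * CFC.sqrt (Mᴴ * M) = CFC.sqrt (Mᴴ * M) ∧ U * CFC.sqrt (Mᴴ * M) = M := by
  set S := CFC.sqrt (Mᴴ * M)
  have hS : IsSelfAdjoint S := (CFC.sqrt_nonneg _).isSelfAdjoint
  have hSS : Mᴴ * M = S * S :=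
    (CFC.sqrt_mul_sqrt_self _ (posSemidef_conjTranspose_mul_self M).nonneg).symm
  -- `0⁻¹ = 0` makes `G` the pseudo-inverse of `S`, so that `S * G` projects onto the range of `S`
  set G := cfc (fun t : ℝ => t⁻¹) S
  have hG : Gᴴ = G := (cfc_predicate _ S : IsSelfAdjoint G).star_eq
  have hGS : G * S = S * G := by
    conv_lhs => rw [← cfc_id' ℝ S hS]
    conv_rhs => rw [← cfc_id' ℝ S hS]
    exact cfc_commute_cfc _ _ S
  have hSGS : S * G * S = S := by
    have hcont (f : ℝ → ℝ) : ContinuousOn f (spectrum ℝ S) :=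
      (spectrum ℝ S).toFinite.continuousOn f
    conv => enter [1]; rw [← cfc_id' ℝ S hS]
    conv => enter [2]; rw [← cfc_id' ℝ S hS]
    rw [← cfc_mul _ _ S (hcont _) (hcont _), ← cfc_mul _ _ S (hcont _) (hcont _)]
    congr 1
    funext t
    exact mul_inv_mul_cancel t
  set E := S * G
  have hE : IsIdempotentElem E := by
    unfold IsIdempotentElem
    rw [← Matrix.mul_assoc, hSGS]
  have hSE : S * E = S := by
    rw [← hGS, ← Matrix.mul_assoc]
    exact hSGS
  have hME : M * E = M := by
    have hS1E : S * (1 - E) = 0 := by rw [Matrix.mul_sub, hSE, Matrix.mul_one, sub_self]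
    have : M - M * E = M * (1 - E) := by rw [Matrix.mul_sub, Matrix.mul_one]
    refine (sub_eq_zero.mp ?_).symm
    rw [← conjTranspose_mul_self_eq_zero, this, conjTranspose_mul,
      Matrix.mul_assoc, ← Matrix.mul_assoc Mᴴ, hSS, Matrix.mul_assoc, hS1E, Matrix.mul_zero,
      Matrix.mul_zero]
  have hUU : (M * G)ᴴ * (M * G) = E := by
    rw [conjTranspose_mul, hG, Matrix.mul_assoc, ← Matrix.mul_assoc Mᴴ, hSS,
      Matrix.mul_assoc S S G, hSE, hGS]
  refine ⟨M * G, hUU ▸ hE, hUU ▸ hSGS, ?_⟩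
  rw [Matrix.mul_assoc, hGS, hME]

lemma trace_conjTranspose_mul_eq_sum (A B : Matrix m n ℂ) :
    (Aᴴ * B).trace = ∑ q : m × n, star (A q.1 q.2) * B q.1 q.2 := by
  rw [Fintype.sum_prod_type, Finset.sum_comm]
  rfl

lemma re_trace_conjTranspose_mul_self (A : Matrix m n ℂ) :
    (Aᴴ * A).trace.re = ∑ q : m × n, ‖A q.1 q.2‖ ^ 2 := by
  simp [trace_conjTranspose_mul_eq_sum, Complex.re_sum, ← Complex.normSq_eq_norm_sq,
    Complex.normSq_apply]

lemma norm_trace_conjTranspose_mul_le (A B : Matrix m n ℂ) :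
    ‖(Aᴴ * B).trace‖ ≤ √(Aᴴ * A).trace.re * √(Bᴴ * B).trace.re := by
  rw [re_trace_conjTranspose_mul_self, re_trace_conjTranspose_mul_self,
    trace_conjTranspose_mul_eq_sum]
  calc ‖∑ q : m × n, star (A q.1 q.2) * B q.1 q.2‖
      ≤ ∑ q : m × n, ‖A q.1 q.2‖ * ‖B q.1 q.2‖ :=
        (norm_sum_le _ _).trans_eq (by simp)
    _ ≤ _ := Real.sum_mul_le_sqrt_mul_sqrt _ _ _

lemma norm_trace_mul_le_re_trace [DecidableEq n] {Z P : Matrix n n ℂ} (hZ : Zᴴ * Z ≤ 1)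
    (hP : 0 ≤ P) : ‖(Z * P).trace‖ ≤ P.trace.re := by
  set R := CFC.sqrt P
  have hR : Rᴴ = R := (CFC.sqrt_nonneg P).isSelfAdjoint.star_eq
  have hRR : R * R = P := CFC.sqrt_mul_sqrt_self P hP
  have hRR' : (Rᴴ * R).trace.re = P.trace.re := by rw [hR, hRR]
  have hZR : ((Z * R)ᴴ * (Z * R)).trace.re ≤ P.trace.re := by
    rw [← hRR']
    apply re_trace_le_re_trace
    calc (Z * R)ᴴ * (Z * R) = Rᴴ * (Zᴴ * Z) * R := by
          rw [conjTranspose_mul]; simp only [Matrix.mul_assoc]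
      _ ≤ Rᴴ * 1 * R := conjTranspose_mul_mul_le_of_le hZ R
      _ = Rᴴ * R := by rw [Matrix.mul_one]
  calc ‖(Z * P).trace‖ = ‖(Rᴴ * (Z * R)).trace‖ := by
        rw [hR, ← hRR, ← Matrix.mul_assoc, trace_mul_comm]
    _ ≤ √(Rᴴ * R).trace.re * √((Z * R)ᴴ * (Z * R)).trace.re :=
        norm_trace_conjTranspose_mul_le R (Z * R)
    _ ≤ √P.trace.re * √P.trace.re := by rw [hRR']; gcongr
    _ = P.trace.re :=
        Real.mul_self_sqrt (Complex.le_def.mp (nonneg_iff_posSemidef.mp hP).trace_nonneg).1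

theorem isGreatest_traceNorm [DecidableEq n] (M : Matrix m n ℂ) :
    IsGreatest {x | ∃ W : Matrix n m ℂ, IsIdempotentElem (Wᴴ * W) ∧ x = ‖(M * W).trace‖}
      (traceNorm M) := by
  classical
  rw [traceNorm_eq_re_trace_sqrt]
  obtain ⟨U, hUU, hUS, hUM⟩ := exists_polar_decomposition M
  set S := CFC.sqrt (Mᴴ * M)
  have hS : 0 ≤ S := CFC.sqrt_nonneg _
  constructor
  · refine ⟨Uᴴ, ?_, ?_⟩
    · rwa [conjTranspose_conjTranspose, isIdempotentElem_mul_conjTranspose_self_iff]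
    · rw [← hUM, trace_mul_cycle, hUS, Complex.re_eq_norm.mpr]
      exact (nonneg_iff_posSemidef.mp hS).trace_nonneg
  · rintro _ ⟨W, hW, rfl⟩
    rw [← hUM, trace_mul_cycle]
    refine norm_trace_mul_le_re_trace ?_ hS
    calc (W * U)ᴴ * (W * U) = Uᴴ * (Wᴴ * W) * U := by
          rw [conjTranspose_mul]; simp only [Matrix.mul_assoc]
      _ ≤ Uᴴ * 1 * U := conjTranspose_mul_mul_le_of_le (conjTranspose_mul_self_le_one hW) U
      _ ≤ 1 := by rw [Matrix.mul_one]; exact conjTranspose_mul_self_le_one hUU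

lemma norm_trace_conjTranspose_mul (A B : Matrix m n ℂ) :
    ‖(Aᴴ * B).trace‖ = ‖(A * Bᴴ).trace‖ := by
  rw [← norm_star, ← trace_conjTranspose, conjTranspose_mul, conjTranspose_conjTranspose,
    trace_mul_comm]

theorem traceNorm_conjTranspose [DecidableEq m] [DecidableEq n] (M : Matrix m n ℂ) :
    traceNorm Mᴴ = traceNorm M := by
  have hset : {x | ∃ W : Matrix m n ℂ, IsIdempotentElem (Wᴴ * W) ∧ x = ‖(Mᴴ * W).trace‖} =
      {x | ∃ W : Matrix n m ℂ, IsIdempotentElem (Wᴴ * W) ∧ x = ‖(M * W).trace‖} := by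
    ext x
    constructor
    · rintro ⟨W, hW, rfl⟩
      refine ⟨Wᴴ, ?_, norm_trace_conjTranspose_mul M W⟩
      rwa [conjTranspose_conjTranspose, isIdempotentElem_mul_conjTranspose_self_iff]
    · rintro ⟨W, hW, rfl⟩
      refine ⟨Wᴴ, ?_, ?_⟩
      · rwa [conjTranspose_conjTranspose, isIdempotentElem_mul_conjTranspose_self_iff]
      · rw [norm_trace_conjTranspose_mul, conjTranspose_conjTranspose]
  exact (isGreatest_traceNorm Mᴴ).unique (hset ▸ isGreatest_traceNorm M)

lemma traceNorm_eq_of_conjTranspose_mul_self_eq [DecidableEq n] {A : Matrix m n ℂ}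
    {B : Matrix p n ℂ} (h : Aᴴ * A = Bᴴ * B) : traceNorm A = traceNorm B := by
  rw [traceNorm_eq_re_trace_sqrt, traceNorm_eq_re_trace_sqrt, h]

lemma traceNorm_eq_of_mul_conjTranspose_self_eq [DecidableEq m] [DecidableEq n] [DecidableEq p]
    {A : Matrix m n ℂ} {B : Matrix m p ℂ} (h : A * Aᴴ = B * Bᴴ) : traceNorm A = traceNorm B := by
  rw [← traceNorm_conjTranspose A, ← traceNorm_conjTranspose B]
  exact traceNorm_eq_of_conjTranspose_mul_self_eq (by simpa only [conjTranspose_conjTranspose])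

end Matrix

section Purification

open Matrix

variable {a b c : Type*} [Fintype b] [Fintype c]

lemma mul_conjTranspose_self_eq_ptraceSnd (ψ : EuclideanSpace ℂ (a × b)) :
    (of fun i j => ψ (i, j)) * (of fun i j => ψ (i, j))ᴴ =
      ptraceSnd (vecMulVec (fun p => ψ p) (fun p => (starRingEnd ℂ) (ψ p))) := by
  ext i j
  simp only [ptraceSnd, vecMulVec_apply, mul_apply, conjTranspose_apply, of_apply]
  rfl

lemma traceNorm_sqrt_mul_sqrt_eq [Fintype a] [DecidableEq a] [DecidableEq b] [DecidableEq c]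
    {ρ σ : Matrix a a ℂ} (hρ : ρ.PosSemidef) (hσ : σ.PosSemidef) {X : Matrix a b ℂ}
    {Y : Matrix a c ℂ} (hX : X * Xᴴ = ρ) (hY : Y * Yᴴ = σ) :
    traceNorm (hρ.sqrt * hσ.sqrt) = traceNorm (Xᴴ * Y) := by
  have hρ' := hρ.isHermitian_sqrt.eq
  have hσ' := hσ.isHermitian_sqrt.eq
  calc traceNorm (hρ.sqrt * hσ.sqrt) = traceNorm (Xᴴ * hσ.sqrt) := by
        refine traceNorm_eq_of_conjTranspose_mul_self_eq ?_
        simp only [conjTranspose_mul, conjTranspose_conjTranspose, hρ', hσ', Matrix.mul_assoc]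
        rw [← Matrix.mul_assoc hρ.sqrt, hρ.sqrt_mul_self, ← hX, Matrix.mul_assoc]
    _ = traceNorm (Xᴴ * Y) := by
        refine traceNorm_eq_of_mul_conjTranspose_self_eq ?_
        simp only [conjTranspose_mul, conjTranspose_conjTranspose, hσ', Matrix.mul_assoc]
        rw [← Matrix.mul_assoc hσ.sqrt, hσ.sqrt_mul_self, ← hY, Matrix.mul_assoc]

lemma inner_one_kronecker_conjTranspose_mulVec [Fintype a] [DecidableEq a]
    (ψ : EuclideanSpace ℂ (a × b)) (φ : EuclideanSpace ℂ (a × c)) (V : Matrix c b ℂ) :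
    ⟪ψ, (EuclideanSpace.equiv (a × b) ℂ).symm
        (((1 : Matrix a a ℂ) ⊗ₖ Vᴴ).mulVec (fun p => φ p))⟫_ℂ =
      ((of fun i j => ψ (i, j))ᴴ * (of fun i l => φ (i, l)) * V.map star).trace := by
  simp only [PiLp.inner_apply, RCLike.inner_apply, Matrix.trace, Matrix.diag_apply,
    Matrix.mul_apply, Matrix.mulVec, dotProduct, kroneckerMap_apply, Matrix.one_apply,
    Fintype.sum_prod_type, Matrix.map_apply, conjTranspose_apply, Matrix.of_apply,
    EuclideanSpace.equiv, PiLp.continuousLinearEquiv_symm_apply]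
  simp only [Finset.sum_mul, ite_mul, zero_mul, one_mul, starRingEnd_apply,
    Finset.sum_ite_irrel, Finset.sum_const_zero, Finset.sum_ite_eq, Finset.mem_univ, if_true]
  rw [Finset.sum_comm]
  refine Finset.sum_congr rfl fun j _ => ?_
  rw [Finset.sum_comm]
  exact Finset.sum_congr rfl fun l _ => Finset.sum_congr rfl fun i _ => by ring

end Purification

theorem uhlmann_general
    {a b c : Type*} [Fintype a] [Fintype b] [Fintype c]
    [DecidableEq a]
    (ρ σ : Matrix a a ℂ)
    (hρ : ρ.PosSemidef)
    (hσ : σ.PosSemidef)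
    (ψ : EuclideanSpace ℂ (a × b))
    (hψρ : ptraceSnd (Matrix.vecMulVec (fun p => ψ p) (fun p => (starRingEnd ℂ) (ψ p))) = ρ)
    (φ : EuclideanSpace ℂ (a × c))
    (hφσ : ptraceSnd (Matrix.vecMulVec (fun p => φ p) (fun p => (starRingEnd ℂ) (φ p))) = σ) :
    IsGreatest { x : ℝ | ∃ V : Matrix c b ℂ,
        (Vᴴ * V) * (Vᴴ * V) = Vᴴ * V ∧
        x = ‖(⟪ψ, (EuclideanSpace.equiv (a × b) ℂ).symm
              ((((1 : Matrix a a ℂ) ⊗ₖ Vᴴ).mulVec (fun p => φ p)))⟫_ℂ)‖ }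
      (traceNorm (hρ.sqrt * hσ.sqrt)) := by
  classical
  set X : Matrix a b ℂ := of fun i j => ψ (i, j)
  set Y : Matrix a c ℂ := of fun i l => φ (i, l)
  have hset : { x : ℝ | ∃ V : Matrix c b ℂ, (Vᴴ * V) * (Vᴴ * V) = Vᴴ * V ∧
      x = ‖(⟪ψ, (EuclideanSpace.equiv (a × b) ℂ).symm
        ((((1 : Matrix a a ℂ) ⊗ₖ Vᴴ).mulVec (fun p => φ p)))⟫_ℂ)‖ } =
      {x | ∃ W : Matrix c b ℂ, IsIdempotentElem (Wᴴ * W) ∧ x = ‖(Xᴴ * Y * W).trace‖} := by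
    ext x
    simp only [inner_one_kronecker_conjTranspose_mulVec]
    constructor
    · rintro ⟨V, hV, rfl⟩
      exact ⟨V.map star, isIdempotentElem_conjTranspose_mul_self_map_star.mpr hV, rfl⟩
    · rintro ⟨W, hW, rfl⟩
      refine ⟨W.map star, isIdempotentElem_conjTranspose_mul_self_map_star.mpr hW, ?_⟩
      rw [Matrix.map_map, star_involutive.comp_self, Matrix.map_id]
  rw [hset, traceNorm_sqrt_mul_sqrt_eq hρ hσ (hψρ ▸ mul_conjTranspose_self_eq_ptraceSnd ψ)
    (hφσ ▸ mul_conjTranspose_self_eq_ptraceSnd φ)]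
  exact isGreatest_traceNorm (Xᴴ * Y)

/-- Uhlmann's theorem: for purifications `|ψ⟩` of `ρ` and `|φ⟩` of `σ`, the fidelity
`F(ρ,σ) = ‖√ρ√σ‖₁` equals the maximum over partial isometries `V : B → C` of
`|⟨ψ|(I ⊗ V†)|φ⟩|`, and the maximum is attained. -/
theorem uhlmann
    {a b c : Type*} [Fintype a] [Fintype b] [Fintype c]
    [DecidableEq a] [DecidableEq b] [DecidableEq c]
    (ρ σ : Matrix a a ℂ)
    (hρ : ρ.PosSemidef) (hρ1 : ρ.trace = 1)
    (hσ : σ.PosSemidef) (hσ1 : σ.trace = 1)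
    (ψ : EuclideanSpace ℂ (a × b)) (hψ : ‖ψ‖ = 1)
    (hψρ : ptraceSnd (Matrix.vecMulVec (fun p => ψ p) (fun p => (starRingEnd ℂ) (ψ p))) = ρ)
    (φ : EuclideanSpace ℂ (a × c)) (hφ : ‖φ‖ = 1)
    (hφσ : ptraceSnd (Matrix.vecMulVec (fun p => φ p) (fun p => (starRingEnd ℂ) (φ p))) = σ) :
    IsGreatest { x : ℝ | ∃ V : Matrix c b ℂ,
        (Vᴴ * V) * (Vᴴ * V) = Vᴴ * V ∧
        x = ‖(⟪ψ, (EuclideanSpace.equiv (a × b) ℂ).symm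
              ((((1 : Matrix a a ℂ) ⊗ₖ Vᴴ).mulVec (fun p => φ p)))⟫_ℂ)‖ }
      (traceNorm (hρ.sqrt * hσ.sqrt)) :=
  uhlmann_general ρ σ hρ hσ ψ hψρ φ hφσ
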